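/- Let b_1, ..., b_n be i.i.d. random variables taking values in {1, 2, ...} with sum b. If D = 0 (i.e., all weighted true gradients coincide: nγ_i∇F_i = ∇F for all i), then the proportional variance bound n²μ₃σ²Σγ_i² is at most the equal-weighting variance bound μ₂σ²Σγ_i², where μ₂ = E[1/b_i] and μ₃ = E[b_i/b²]. -/

import Mathlib

open MeasureTheory ProbabilityTheory Finset

/-!
Pointwise, Cauchy–Schwarz in Sedrakyan's form gives `n² / b ≤ ∑ᵢ 1 / bᵢ` for `b = ∑ᵢ bᵢ`.
Since `∑ᵢ bᵢ / b² = 1 / b`, integrating turns this into `n² · n μ₃ ≤ n μ₂`, i.e. `n² μ₃ ≤ μ₂`;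
multiplying by `σ² ∑ γᵢ² ≥ 0` gives the claim.
-/

lemma card_sq_div_sum_le_sum_one_div {ι : Type*} [Fintype ι] (x : ι → ℝ) (hx : ∀ i, 0 < x i) :
    (Fintype.card ι : ℝ) ^ 2 / ∑ i, x i ≤ ∑ i, 1 / x i := by
  simpa using sq_sum_div_le_sum_sq_div univ (fun _ ↦ (1 : ℝ)) (fun i _ ↦ hx i)

section

variable {Ω ι : Type*} [MeasurableSpace Ω] {μ : Measure Ω} [IsFiniteMeasure μ]

lemma integrable_div_of_le {f g : Ω → ℝ} (hf : Measurable f) (hg : Measurable g)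
    (hf₀ : ∀ ω, 0 ≤ f ω) (hfg : ∀ ω, f ω ≤ g ω) : Integrable (fun ω ↦ f ω / g ω) μ := by
  refine .of_bound (hf.div hg).aestronglyMeasurable 1 (.of_forall fun ω ↦ ?_)
  have hg₀ : 0 ≤ g ω := (hf₀ ω).trans (hfg ω)
  rw [Real.norm_of_nonneg (div_nonneg (hf₀ ω) hg₀)]
  exact div_le_one_of_le₀ (hfg ω) hg₀

variable [Fintype ι] {X : ι → Ω → ℝ}

lemma integral_one_div_sum_eq_sum_integral_div_sq (hX : ∀ i ω, 1 ≤ X i ω)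
    (hXm : ∀ i, Measurable (X i)) :
    ∫ ω, 1 / ∑ j, X j ω ∂μ = ∑ i, ∫ ω, X i ω / (∑ j, X j ω) ^ 2 ∂μ := by
  have hle_sum : ∀ i ω, X i ω ≤ ∑ j, X j ω := fun i ω ↦
    single_le_sum (fun j _ ↦ zero_le_one.trans (hX j ω)) (mem_univ i)
  have hint : ∀ i, Integrable (fun ω ↦ X i ω / (∑ j, X j ω) ^ 2) μ := fun i ↦
    integrable_div_of_le (hXm i) ((measurable_sum _ fun j _ ↦ hXm j).pow_const 2)
      (fun ω ↦ zero_le_one.trans (hX i ω))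
      (fun ω ↦ (hle_sum i ω).trans (le_self_pow₀ ((hX i ω).trans (hle_sum i ω)) two_ne_zero))
  rw [← integral_finsetSum _ fun i _ ↦ hint i]
  congr 1 with ω
  rw [← sum_div, sq, div_self_mul_self', one_div]

lemma card_sq_mul_integral_one_div_sum_le [Nonempty ι] (hX : ∀ i ω, 1 ≤ X i ω)
    (hXm : ∀ i, Measurable (X i)) :
    (Fintype.card ι : ℝ) ^ 2 * ∫ ω, 1 / ∑ j, X j ω ∂μ ≤ ∑ i, ∫ ω, 1 / X i ω ∂μ := by
  have hint : ∀ i, Integrable (fun ω ↦ 1 / X i ω) μ := fun i ↦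
    integrable_div_of_le measurable_const (hXm i) (fun _ ↦ zero_le_one) (hX i)
  have hint_sum : Integrable (fun ω ↦ 1 / ∑ j, X j ω) μ := by
    obtain ⟨i⟩ := ‹Nonempty ι›
    refine integrable_div_of_le measurable_const (measurable_sum _ fun j _ ↦ hXm j)
      (fun _ ↦ zero_le_one) fun ω ↦ (hX i ω).trans ?_
    exact single_le_sum (fun j _ ↦ zero_le_one.trans (hX j ω)) (mem_univ i)
  rw [← integral_const_mul, ← integral_finsetSum _ fun i _ ↦ hint i]
  refine integral_mono (hint_sum.const_mul _) (integrable_finsetSum _ fun i _ ↦ hint i)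
    fun ω ↦ ?_
  rw [mul_one_div]
  exact card_sq_div_sum_le_sum_one_div _ fun i ↦ zero_lt_one.trans_le (hX i ω)

theorem card_sq_mul_le_of_integral_eq [Nonempty ι] (hX : ∀ i ω, 1 ≤ X i ω)
    (hXm : ∀ i, Measurable (X i)) {m₂ m₃ : ℝ} (hm₂ : ∀ i, ∫ ω, 1 / X i ω ∂μ = m₂)
    (hm₃ : ∀ i, ∫ ω, X i ω / (∑ j, X j ω) ^ 2 ∂μ = m₃) :
    (Fintype.card ι : ℝ) ^ 2 * m₃ ≤ m₂ := by
  have key := card_sq_mul_integral_one_div_sum_le (μ := μ) hX hXm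
  simp only [integral_one_div_sum_eq_sum_integral_div_sq hX hXm, hm₂, hm₃, sum_const,
    card_univ, nsmul_eq_mul] at key
  have hcard : (0 : ℝ) < Fintype.card ι := by exact_mod_cast Fintype.card_pos
  refine le_of_mul_le_mul_left ?_ hcard
  linarith [key]

end

theorem proportional_bound_le_equal_bound_of_D_zero_general {Ω : Type*} [MeasureSpace Ω]
    [IsProbabilityMeasure (ℙ : Measure Ω)] {n : ℕ} (hn : 0 < n)
    (b : Fin n → Ω → ℕ)
    (hpos : ∀ i ω, 1 ≤ b i ω)
    (hmeas : ∀ i, Measurable (b i))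
    (γ : Fin n → ℝ)
    (σ2 : ℝ) (hσ2 : 0 < σ2)
    (μ2 μ3 : ℝ)
    (hμ2 : ∀ i, ∫ ω, (1 / (b i ω : ℝ)) ∂ℙ = μ2)
    (hμ3 : ∀ i, ∫ ω, ((b i ω : ℝ) / (∑ j, (b j ω : ℝ)) ^ 2) ∂ℙ = μ3) :
    (n : ℝ) ^ 2 * μ3 * σ2 * (∑ i, (γ i) ^ 2) ≤ μ2 * σ2 * (∑ i, (γ i) ^ 2) := by
  have : Nonempty (Fin n) := ⟨⟨0, hn⟩⟩
  have hmoments : (n : ℝ) ^ 2 * μ3 ≤ μ2 := by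
    simpa using card_sq_mul_le_of_integral_eq (X := fun i ω ↦ (b i ω : ℝ))
      (fun i ω ↦ by exact_mod_cast hpos i ω) (fun i ↦ measurable_from_nat.comp (hmeas i)) hμ2 hμ3
  have hweight : 0 ≤ σ2 * ∑ i, γ i ^ 2 := mul_nonneg hσ2.le (sum_nonneg fun i _ ↦ sq_nonneg _)
  calc (n : ℝ) ^ 2 * μ3 * σ2 * ∑ i, γ i ^ 2 = (n ^ 2 * μ3) * (σ2 * ∑ i, γ i ^ 2) := by ring
    _ ≤ μ2 * (σ2 * ∑ i, γ i ^ 2) := mul_le_mul_of_nonneg_right hmoments hweight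
    _ = μ2 * σ2 * ∑ i, γ i ^ 2 := by ring

/-- When `D = 0` (all weighted true gradients coincide: `nγᵢ • ∇Fᵢ = ∇F`), the
proportional variance bound `n²μ₃σ²Σγᵢ²` is at most the equal-weighting variance bound
`μ₂σ²Σγᵢ²`, where `μ₂ = E[1/bᵢ]` and `μ₃ = E[bᵢ/b²]` for i.i.d. positive-integer `bᵢ`. -/
theorem proportional_bound_le_equal_bound_of_D_zero {Ω : Type*} [MeasureSpace Ω]
    [IsProbabilityMeasure (ℙ : Measure Ω)] {d n : ℕ} (hn : 0 < n)
    (b : Fin n → Ω → ℕ)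
    (hpos : ∀ i ω, 1 ≤ b i ω)
    (hmeas : ∀ i, Measurable (b i))
    (hindep : iIndepFun b ℙ)
    (hident : ∀ i j, IdentDistrib (b i) (b j) ℙ ℙ)
    (γ : Fin n → ℝ) (hγ : ∀ i, 0 ≤ γ i) (hγsum : ∑ i, γ i = 1)
    (gradFi : Fin n → EuclideanSpace ℝ (Fin d))
    (hDzero : ∀ i, (n : ℝ) • γ i • gradFi i = ∑ j, γ j • gradFi j)
    (σ2 : ℝ) (hσ2 : 0 < σ2)
    (μ2 μ3 : ℝ)
    (hμ2 : ∀ i, ∫ ω, (1 / (b i ω : ℝ)) ∂ℙ = μ2)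
    (hμ3 : ∀ i, ∫ ω, ((b i ω : ℝ) / (∑ j, (b j ω : ℝ)) ^ 2) ∂ℙ = μ3) :
    (n : ℝ) ^ 2 * μ3 * σ2 * (∑ i, (γ i) ^ 2) ≤ μ2 * σ2 * (∑ i, (γ i) ^ 2) :=
  proportional_bound_le_equal_bound_of_D_zero_general hn b hpos hmeas γ σ2 hσ2 μ2 μ3 hμ2 hμ3
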